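/- arXiv:2604.07866 — 3 statements merged into one kernel-verified Lean document; each statement's English description precedes it below -/
import Mathlib

section
/- Let Ω be a bounded C² domain in ℝ^N (N ≥ 2). Let H₁, H₂ be two bounded Radon measures on Ω such that ∫_Ω ξ dH₁ ≥ ∫_Ω ξ dH₂ for every nonnegative ξ ∈ C(Ω̄). Let w₁, w₂ ∈ C^{0,1}(Ω̄) with w₁ ≥ w₂, and for i = 1, 2 let u_i ∈ C^{0,1}(Ω̄) be the maximizer of the functional 𝓘_{w_i,H_i}(u) = ∫_Ω √(1 − |∇u|²) dx + ∫_Ω u dH_i over 𝕏_{w_i}(Ω). Then u₁ ≥ u₂ in Ω. -/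
open MeasureTheory Real Filter Topology Metric
open scoped NNReal

noncomputable section

/-- Euclidean `N`-space `ℝ^N`. -/
abbrev Euc (N : ℕ) := EuclideanSpace ℝ (Fin N)

/-- Divergence of a vector field on `ℝ^N`. -/
def vdiv {N : ℕ} (V : Euc N → Euc N) (x : Euc N) : ℝ :=
  ∑ i : Fin N,
    (inner ℝ (fderiv ℝ V x (EuclideanSpace.single i (1 : ℝ)))
      (EuclideanSpace.single i (1 : ℝ)) : ℝ)

/-- The Lorentz–Minkowski mean curvature operator `ℳ₀u = -div(∇u/√(1-|∇u|²))`. -/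
def MC {N : ℕ} (u : Euc N → ℝ) (x : Euc N) : ℝ :=
  -vdiv (fun y => (Real.sqrt (1 - ‖gradient u y‖ ^ 2))⁻¹ • gradient u y) x

/-- `|∂B₁(0)|`, the surface area of the unit sphere of `ℝ^N`. -/
def sphArea (N : ℕ) : ℝ := N * (volume (ball (0 : Euc N) 1)).toReal

/-- `c_N = 1/|∂B₁(0)|`. -/
def cN (N : ℕ) : ℝ := (sphArea N)⁻¹

/-- Radial profile of the fundamental light-cone solution, `N ≥ 3`. -/
def Phirad (N : ℕ) (α r : ℝ) : ℝ :=
  cN N * α * ∫ s in Set.Ioi r, (Real.sqrt (s ^ (2 * (N - 1)) + (cN N * α) ^ 2))⁻¹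

/-- The fundamental solution `Φ_{N,α}` for `N ≥ 3`. -/
def Phi (N : ℕ) (α : ℝ) (x : Euc N) : ℝ := Phirad N α ‖x‖

/-- Radial profile of the two-dimensional fundamental solution `Φ_{2,α}`. -/
def Phi2rad (α r : ℝ) : ℝ :=
  -(α / (2 * Real.pi)) *
    (Real.log (r + Real.sqrt ((α / (2 * Real.pi)) ^ 2 + r ^ 2)) - Real.log (α / (2 * Real.pi)))

/-- The two-dimensional fundamental solution `Φ_{2,α}`. -/
def Phi2 (α : ℝ) (x : Euc 2) : ℝ := Phi2rad α ‖x‖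

/-- Radial profile of the fundamental solution, any dimension. -/
def PhiradG (N : ℕ) (α r : ℝ) : ℝ := if N = 2 then Phi2rad α r else Phirad N α r

/-- The weak pairing `∫ ∇u·∇φ/√(1-|∇u|²)`. -/
def pairing {N : ℕ} (u φ : Euc N → ℝ) : ℝ :=
  ∫ x, (inner ℝ (gradient u x) (gradient φ x) : ℝ) / Real.sqrt (1 - ‖gradient u x‖ ^ 2)

/-- The weak pairing `∫_s ∇u·∇φ/√(1-|∇u|²)` on a set `s`. -/
def pairingOn {N : ℕ} (u φ : Euc N → ℝ) (s : Set (Euc N)) : ℝ :=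
  ∫ x in s, (inner ℝ (gradient u x) (gradient φ x) : ℝ) / Real.sqrt (1 - ‖gradient u x‖ ^ 2)

/-- A compactly supported Lipschitz test function. -/
def IsLipTest {N : ℕ} (φ : Euc N → ℝ) : Prop :=
  (∃ K : ℝ≥0, LipschitzWith K φ) ∧ HasCompactSupport φ

/-- `u` is light-cone singular exactly at the points of `P`. -/
def LightConeSingularAt {N : ℕ} (u : Euc N → ℝ) (P : Set (Euc N)) : Prop :=
  (∀ x ∉ P, ‖gradient u x‖ < 1) ∧
    ∀ p ∈ P, Tendsto (fun x => ‖gradient u x‖) (𝓝[≠] p) (𝓝 1)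

/-- Weak solution of `ℳ₀u = ∑ αⱼ δ_{pⱼ}` in `𝒟'(ℝ^N)` vanishing at infinity. -/
def IsWeakSolRN {N m : ℕ} (u : Euc N → ℝ) (p : Fin m → Euc N) (α : Fin m → ℝ) : Prop :=
  (∃ K : ℝ≥0, LipschitzWith K u) ∧
    ContDiffOn ℝ 2 u {x | ∀ j, x ≠ p j} ∧
    LocallyIntegrable (fun x => ‖gradient u x‖ / Real.sqrt (1 - ‖gradient u x‖ ^ 2)) volume ∧
    Tendsto u (cocompact (Euc N)) (𝓝 0) ∧
    ∀ φ : Euc N → ℝ, IsLipTest φ → pairing u φ = ∑ j, α j * φ (p j)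

/-- The class `𝕏_∞(ℝ^N)`. -/
def Xinf {N : ℕ} : Set (Euc N → ℝ) :=
  {v | LipschitzWith 1 v ∧
    Integrable (fun x => 1 - Real.sqrt (1 - ‖gradient v x‖ ^ 2)) volume}

/-- The energy functional `𝒥_N`. -/
def JN {N m : ℕ} (p : Fin m → Euc N) (α : Fin m → ℝ) (w : Euc N → ℝ) : ℝ :=
  (∫ x, (1 - Real.sqrt (1 - ‖gradient w x‖ ^ 2))) - ∑ j, α j * w (p j)

/-- Directional (partial) derivative in the `i`-th coordinate direction. -/
def dirDeriv {N : ℕ} (i : Fin N) (f : Euc N → ℝ) (x : Euc N) : ℝ :=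
  fderiv ℝ f x (EuclideanSpace.single i (1 : ℝ))

/-- The multi-index partial derivative `D^a`. -/
def multiDeriv {N : ℕ} (a : Fin N → ℕ) (f : Euc N → ℝ) : Euc N → ℝ :=
  (List.finRange N).foldr (fun i g => (fun h => dirDeriv i h)^[a i] g) f

/-- `ws` is the symmetric decreasing rearrangement of `w` on the ball `B_R(0)`. -/
def IsSDROn {N : ℕ} (R : ℝ) (w ws : Euc N → ℝ) : Prop :=
  (∀ x y : Euc N, ‖x‖ ≤ ‖y‖ → ws y ≤ ws x) ∧
    ∀ t : ℝ, 0 < t →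
      volume {x : Euc N | x ∈ ball 0 R ∧ t < ws x} = volume {x : Euc N | x ∈ ball 0 R ∧ t < w x}

/-- Classical solution of the Dirichlet problem `ℳ₀u = f` on `B_R(z)`, `u = 0` on `∂B_R(z)`. -/
def IsClassicalDirichletAt {N : ℕ} (u : Euc N → ℝ) (z : Euc N) (R : ℝ) (f : Euc N → ℝ) : Prop :=
  ContinuousOn u (closure (ball z R)) ∧ ContDiffOn ℝ 2 u (ball z R) ∧
    (∀ x ∈ ball z R, ‖gradient u x‖ < 1 ∧ MC u x = f x) ∧
    ∀ x ∈ sphere z R, u x = 0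

/-- Classical solution of `ℳ₀u = f` on `ℝ^N` vanishing at infinity. -/
def IsClassicalEntire {N : ℕ} (u : Euc N → ℝ) (f : Euc N → ℝ) : Prop :=
  ContDiff ℝ 2 u ∧ (∀ x, ‖gradient u x‖ < 1 ∧ MC u x = f x) ∧
    Tendsto u (cocompact (Euc N)) (𝓝 0)

/-- Weak solution of `ℳ₀u = ∑ αⱼ δ_{pⱼ}` on `B_R(z)` with zero boundary data. -/
def IsWeakSolBallAt {N m : ℕ} (u : Euc N → ℝ) (z : Euc N) (R : ℝ)
    (p : Fin m → Euc N) (α : Fin m → ℝ) : Prop :=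
  LipschitzOnWith 1 u (closure (ball z R)) ∧
    (∀ x ∈ sphere z R, u x = 0) ∧
    ContDiffOn ℝ 2 u {x | x ∈ ball z R ∧ ∀ j, x ≠ p j} ∧
    IntegrableOn (fun x => ‖gradient u x‖ / Real.sqrt (1 - ‖gradient u x‖ ^ 2)) (ball z R)
      volume ∧
    ∀ φ : Euc N → ℝ, (∃ K : ℝ≥0, LipschitzWith K φ) → (∀ x ∈ sphere z R, φ x = 0) →
      pairingOn u φ (ball z R) = ∑ j, α j * φ (p j)

/-- The class `𝕏_w(Ω)`. -/
def Xw {N : ℕ} (Ω : Set (Euc N)) (w : Euc N → ℝ) : Set (Euc N → ℝ) :=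
  {v | (∃ K : ℝ≥0, LipschitzOnWith K v (closure Ω)) ∧
    (∀ x ∈ frontier Ω, v x = w x) ∧
    ∀ᵐ x ∂volume.restrict Ω, ‖gradient v x‖ ≤ 1}

/-- The functional `𝓘_{w,H}` (its value does not depend on the boundary datum). -/
def Ifun {N : ℕ} (Ω : Set (Euc N)) (H : Measure (Euc N)) (u : Euc N → ℝ) : ℝ :=
  (∫ x in Ω, Real.sqrt (1 - ‖gradient u x‖ ^ 2)) + ∫ x in Ω, u x ∂H

/-!
Comparing `u₁` with `max u₁ u₂` and `u₂` with `min u₁ u₂`: pointwise the gradients of the max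
and the min are those of `u₁, u₂` in some order, so the area terms of the pair are unchanged,
while `max u₁ u₂ - u₁ = u₂ - min u₁ u₂ ≥ 0` makes the measure terms favour the pair because
`H₁ ≥ H₂`. Adding the two maximality inequalities, `max u₁ u₂` is again a maximizer for
`(w₁, H₁)`. Strict concavity of `a ↦ √(1 - |a|²)` forces two maximizers to have a.e. equal
gradients, and a Lipschitz function with a.e. vanishing gradient that vanishes on `∂Ω` is zero
in `Ω` (it is constant on almost every ray of a ball, hence on every ball). So
`max u₁ u₂ = u₁`.
-/

open Set

section Concavity

variable {E : Type*} [NormedAddCommGroup E] [InnerProductSpace ℝ E] {a b : E}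

/-- Quantitative strict concavity: the defect is `‖a - b‖² + (√(1-‖a‖²) - √(1-‖b‖²))²`. -/
theorem norm_sub_sq_le_sqrt_one_sub_norm_sq_midpoint (ha : ‖a‖ ≤ 1) (hb : ‖b‖ ≤ 1) :
    ‖a - b‖ ^ 2 ≤
      (2 * √(1 - ‖(2⁻¹ : ℝ) • (a + b)‖ ^ 2)) ^ 2 - (√(1 - ‖a‖ ^ 2) + √(1 - ‖b‖ ^ 2)) ^ 2 := by
  have hmid : ‖(2⁻¹ : ℝ) • (a + b)‖ ≤ 1 := by
    rw [norm_smul, Real.norm_of_nonneg (by norm_num)]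
    linarith [norm_add_le a b]
  have hs := Real.sq_sqrt (show 0 ≤ 1 - ‖a‖ ^ 2 by nlinarith [norm_nonneg a])
  have ht := Real.sq_sqrt (show 0 ≤ 1 - ‖b‖ ^ 2 by nlinarith [norm_nonneg b])
  rw [mul_pow, Real.sq_sqrt (by nlinarith [norm_nonneg ((2⁻¹ : ℝ) • (a + b))]), norm_smul,
    mul_pow, norm_add_sq_real, norm_sub_sq_real]
  norm_num
  nlinarith [sq_nonneg (√(1 - ‖a‖ ^ 2) - √(1 - ‖b‖ ^ 2))]

theorem sqrt_one_sub_norm_sq_add_le (ha : ‖a‖ ≤ 1) (hb : ‖b‖ ≤ 1) :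
    √(1 - ‖a‖ ^ 2) + √(1 - ‖b‖ ^ 2) ≤ 2 * √(1 - ‖(2⁻¹ : ℝ) • (a + b)‖ ^ 2) := by
  have := norm_sub_sq_le_sqrt_one_sub_norm_sq_midpoint ha hb
  exact abs_le_of_sq_le_sq' (by nlinarith [sq_nonneg ‖a - b‖]) (by positivity) |>.2

theorem eq_of_two_mul_sqrt_one_sub_norm_sq_le (ha : ‖a‖ ≤ 1) (hb : ‖b‖ ≤ 1)
    (h : 2 * √(1 - ‖(2⁻¹ : ℝ) • (a + b)‖ ^ 2) ≤ √(1 - ‖a‖ ^ 2) + √(1 - ‖b‖ ^ 2)) : a = b := by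
  have := norm_sub_sq_le_sqrt_one_sub_norm_sq_midpoint ha hb
  have hsq : ‖a - b‖ ^ 2 ≤ 0 := by linarith [pow_le_pow_left₀ (by positivity) h 2]
  rw [← sub_eq_zero, ← norm_eq_zero]
  exact pow_eq_zero_iff two_ne_zero |>.mp (le_antisymm hsq (sq_nonneg _))

end Concavity

theorem Bornology.IsBounded.eqOn_zero_of_eventually_eq {E F : Type*} [NormedAddCommGroup E]
    [NormedSpace ℝ E] [Nontrivial E] [TopologicalSpace F] [T1Space F] [Zero F] {Ω : Set E}
    (hΩ : Bornology.IsBounded Ω) (hΩo : IsOpen Ω) {h : E → F} (hh : ContinuousOn h (closure Ω))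
    (hloc : ∀ x ∈ Ω, ∀ᶠ y in 𝓝 x, h y = h x) (hfr : EqOn h 0 (frontier Ω)) : EqOn h 0 Ω := by
  intro x₀ hx₀
  by_contra hne
  set T := closure Ω ∩ h ⁻¹' {h x₀}
  have hTΩ : T ⊆ Ω := fun y hy => by
    by_contra hyΩ
    exact hne (hy.2.symm.trans (hfr ⟨hy.1, fun hi => hyΩ (interior_subset hi)⟩))
  have hclosed : IsClosed T := hh.preimage_isClosed_of_isClosed isClosed_closure isClosed_singleton
  have hopen : IsOpen T := isOpen_iff_mem_nhds.mpr fun y hy => by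
    filter_upwards [hloc y (hTΩ hy), hΩo.mem_nhds (hTΩ hy)] with y' h1 h2
    exact ⟨subset_closure h2, h1.trans hy.2⟩
  rcases isClopen_iff.mp ⟨hclosed, hopen⟩ with hempty | huniv
  · exact hempty.subset ⟨subset_closure hx₀, rfl⟩
  · exact NormedSpace.unbounded_univ ℝ E (huniv ▸ hΩ.closure.subset inter_subset_left)

section LocallyConstant

variable {E F : Type*} [NormedAddCommGroup E] [NormedSpace ℝ E] [FiniteDimensional ℝ E]
  [MeasurableSpace E] [BorelSpace E] {μ : Measure E} [μ.IsAddHaarMeasure]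
  [NormedAddCommGroup F] [NormedSpace ℝ F]

theorem measure_preimage_homothety_eq_zero {s : Set E} (hs : μ s = 0) (z : E) {t : ℝ}
    (ht : t ≠ 0) : μ (AffineMap.homothety z t ⁻¹' s) = 0 := by
  have hleft : Function.LeftInverse (AffineMap.homothety z t) (AffineMap.homothety z t⁻¹) :=
    fun x => by rw [← AffineMap.homothety_mul_apply, mul_inv_cancel₀ ht, AffineMap.homothety_one,
      AffineMap.id_apply]
  have hright : Function.RightInverse (AffineMap.homothety z t) (AffineMap.homothety z t⁻¹) :=
    fun x => by rw [← AffineMap.homothety_mul_apply, inv_mul_cancel₀ ht, AffineMap.homothety_one,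
      AffineMap.id_apply]
  rw [← Set.image_eq_preimage_of_inverse hleft hright, Measure.addHaar_image_homothety, hs,
    mul_zero]

theorem LipschitzOnWith.eq_of_ae_hasFDerivAt_zero {h : E → F} {K : ℝ≥0} {s : Set E}
    (hh : LipschitzOnWith K h s) (hs : Convex ℝ s) (hso : IsOpen s)
    (hae : ∀ᵐ x ∂μ, x ∈ s → HasFDerivAt h (0 : E →L[ℝ] F) x) {x z : E} (hx : x ∈ s)
    (hz : z ∈ s) : h x = h z := by
  set Z := toMeasurable μ {x | ¬(x ∈ s → HasFDerivAt h (0 : E →L[ℝ] F) x)}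
  have hZ : μ Z = 0 := by rw [measure_toMeasurable]; exact ae_iff.mp hae
  have hderiv : ∀ y ∈ s, y ∉ Z → HasFDerivAt h (0 : E →L[ℝ] F) y := fun y hy hyZ => by
    by_contra hne
    exact hyZ (subset_toMeasurable _ _ fun hd => hne (hd hy))
  -- Fubini: for `t ≠ 0` the points `y` with `lineMap z y t ∈ Z` form a null set.
  have hrays : ∀ᵐ y ∂μ, ∀ᵐ t : ℝ, AffineMap.lineMap z y t ∉ Z := by
    have hmeas : MeasurableSet {p : E × ℝ | AffineMap.lineMap z p.1 p.2 ∉ Z} := by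
      refine (measurableSet_toMeasurable μ _).compl.preimage (Continuous.measurable ?_)
      simp only [AffineMap.lineMap_apply, vsub_eq_sub, vadd_eq_add]
      fun_prop
    rw [Measure.ae_ae_comm hmeas]
    have hne : ∀ᵐ t : ℝ, t ≠ 0 := compl_mem_ae_iff.mpr (measure_singleton 0)
    filter_upwards [hne] with t ht
    rw [ae_iff]
    simp only [not_not, ← AffineMap.homothety_eq_lineMap]
    exact measure_preimage_homothety_eq_zero hZ z ht
  have hae_eq : ∀ᵐ y ∂μ, y ∈ s → h y = h z := by
    filter_upwards [hrays] with y hy hys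
    have hmaps : MapsTo (AffineMap.lineMap z y) (uIcc (0 : ℝ) 1) s := fun t ht =>
      hs.lineMap_mem hz hys (by rwa [uIcc_of_le zero_le_one] at ht)
    obtain ⟨C, hC⟩ := (hh.comp (lipschitzWith_lineMap z y).lipschitzOnWith hmaps)
      |>.absolutelyContinuousOnInterval.const_of_ae_hasDerivAt_zero (by
        filter_upwards [hy] with t ht htI
        simpa using (hderiv _ (hmaps htI) ht).comp_hasDerivAt t AffineMap.hasDerivAt_lineMap)
    have h0 := hC 0 left_mem_uIcc
    have h1 := hC 1 right_mem_uIcc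
    simp only [Function.comp_apply, AffineMap.lineMap_apply_zero, AffineMap.lineMap_apply_one]
      at h0 h1
    rw [h0, h1]
  have hopen : IsOpen (s ∩ h ⁻¹' {h z}ᶜ) :=
    hh.continuousOn.isOpen_inter_preimage hso isOpen_compl_singleton
  have hnull : μ (s ∩ h ⁻¹' {h z}ᶜ) = 0 := by
    refine measure_mono_null (fun y hy => ?_) (ae_iff.mp hae_eq)
    exact fun hyeq => hy.2 (hyeq hy.1)
  by_contra hne
  exact (hopen.measure_eq_zero_iff μ).mp hnull |>.subset ⟨hx, hne⟩

theorem LipschitzOnWith.ae_differentiableAt_of_isOpen {f : E → ℝ} {K : ℝ≥0} {Ω : Set E}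
    (hΩ : IsOpen Ω) (hf : LipschitzOnWith K f Ω) : ∀ᵐ x ∂μ.restrict Ω, DifferentiableAt ℝ f x := by
  filter_upwards [hf.ae_differentiableWithinAt hΩ.measurableSet,
    ae_restrict_mem hΩ.measurableSet] with x hx hxΩ
  exact hx.differentiableAt (hΩ.mem_nhds hxΩ)

end LocallyConstant

section Gradient

theorem LipschitzOnWith.sup {α : Type*} [PseudoEMetricSpace α] {f g : α → ℝ} {s : Set α}
    {Kf Kg : ℝ≥0} (hf : LipschitzOnWith Kf f s) (hg : LipschitzOnWith Kg g s) :
    LipschitzOnWith (max Kf Kg) (f ⊔ g) s :=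
  lipschitzOnWith_iff_restrict.mpr (hf.to_restrict.max hg.to_restrict)

theorem LipschitzOnWith.inf {α : Type*} [PseudoEMetricSpace α] {f g : α → ℝ} {s : Set α}
    {Kf Kg : ℝ≥0} (hf : LipschitzOnWith Kf f s) (hg : LipschitzOnWith Kg g s) :
    LipschitzOnWith (max Kf Kg) (f ⊓ g) s :=
  lipschitzOnWith_iff_restrict.mpr (hf.to_restrict.min hg.to_restrict)

variable {E : Type*} [NormedAddCommGroup E] [InnerProductSpace ℝ E] [CompleteSpace E]
  {f g : E → ℝ} {x : E}

theorem gradient_eq_of_le_of_eq (hf : DifferentiableAt ℝ f x) (hg : DifferentiableAt ℝ g x)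
    (hle : f ≤ g) (heq : f x = g x) : gradient f x = gradient g x := by
  have hmin : IsLocalMin (g - f) x :=
    Eventually.of_forall fun y => by simpa [heq] using hle y
  have := hmin.fderiv_eq_zero
  rw [fderiv_sub hg hf, sub_eq_zero] at this
  simp only [gradient, this]

theorem gradient_sup_inf (hf : DifferentiableAt ℝ f x) (hg : DifferentiableAt ℝ g x)
    (hsup : DifferentiableAt ℝ (f ⊔ g) x) (hinf : DifferentiableAt ℝ (f ⊓ g) x) :
    gradient (f ⊔ g) x = gradient f x ∧ gradient (f ⊓ g) x = gradient g x ∨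
      gradient (f ⊔ g) x = gradient g x ∧ gradient (f ⊓ g) x = gradient f x := by
  rcases lt_trichotomy (f x) (g x) with hlt | heq | hgt
  · have hev := hf.continuousAt.eventually_lt hg.continuousAt hlt
    exact .inr ⟨EventuallyEq.gradient_eq (hev.mono fun y hy => sup_eq_right.mpr hy.le),
      EventuallyEq.gradient_eq (hev.mono fun y hy => inf_eq_left.mpr hy.le)⟩
  · exact .inl ⟨(gradient_eq_of_le_of_eq hf hsup le_sup_left (by simp [heq])).symm,
      gradient_eq_of_le_of_eq hinf hg inf_le_right (by simp [heq])⟩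
  · have hev := hg.continuousAt.eventually_lt hf.continuousAt hgt
    exact .inl ⟨EventuallyEq.gradient_eq (hev.mono fun y hy => sup_eq_left.mpr hy.le),
      EventuallyEq.gradient_eq (hev.mono fun y hy => inf_eq_right.mpr hy.le)⟩

theorem gradient_midpoint (hf : DifferentiableAt ℝ f x) (hg : DifferentiableAt ℝ g x) :
    gradient (fun y => 2⁻¹ * (f y + g y)) x = (2⁻¹ : ℝ) • (gradient f x + gradient g x) := by
  simp only [gradient]
  rw [fderiv_const_mul (hf.fun_add hg), fderiv_fun_add hf hg, map_smul, map_add]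

theorem hasFDerivAt_sub_zero_of_gradient_eq (hf : DifferentiableAt ℝ f x)
    (hg : DifferentiableAt ℝ g x) (h : gradient f x = gradient g x) :
    HasFDerivAt (fun y => f y - g y) (0 : E →L[ℝ] ℝ) x := by
  have := hf.hasFDerivAt.sub hg.hasFDerivAt
  rwa [← toDual_gradient, ← toDual_gradient, h, sub_self] at this

variable [FiniteDimensional ℝ E] [MeasurableSpace E] [BorelSpace E] {μ : Measure E}
  [μ.IsAddHaarMeasure] {Ω : Set E}

theorem integrableOn_sqrt_one_sub_norm_gradient_sq (hΩb : Bornology.IsBounded Ω)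
    (u : E → ℝ) : IntegrableOn (fun x => √(1 - ‖gradient u x‖ ^ 2)) Ω μ := by
  have hmeas : Measurable (gradient u) :=
    (InnerProductSpace.toDual ℝ E).symm.continuous.measurable.comp (measurable_fderiv ℝ u)
  refine Measure.integrableOn_of_bounded (M := 1) hΩb.measure_lt_top.ne
    (by fun_prop) (Eventually.of_forall fun x => ?_)
  rw [Real.norm_of_nonneg (Real.sqrt_nonneg _), Real.sqrt_le_one]
  linarith [sq_nonneg ‖gradient u x‖]

theorem ae_gradient_sup_inf {Kf Kg : ℝ≥0} (hΩ : IsOpen Ω) (hf : LipschitzOnWith Kf f Ω)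
    (hg : LipschitzOnWith Kg g Ω) : ∀ᵐ x ∂μ.restrict Ω,
      gradient (f ⊔ g) x = gradient f x ∧ gradient (f ⊓ g) x = gradient g x ∨
        gradient (f ⊔ g) x = gradient g x ∧ gradient (f ⊓ g) x = gradient f x := by
  filter_upwards [hf.ae_differentiableAt_of_isOpen hΩ, hg.ae_differentiableAt_of_isOpen hΩ,
    (hf.sup hg).ae_differentiableAt_of_isOpen hΩ, (hf.inf hg).ae_differentiableAt_of_isOpen hΩ]
    with x h₁ h₂ h₃ h₄ using gradient_sup_inf h₁ h₂ h₃ h₄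

theorem eqOn_of_ae_gradient_eq [Nontrivial E] {Kf Kg : ℝ≥0} (hΩb : Bornology.IsBounded Ω)
    (hΩo : IsOpen Ω) (hf : LipschitzOnWith Kf f (closure Ω))
    (hg : LipschitzOnWith Kg g (closure Ω)) (hfr : EqOn f g (frontier Ω))
    (h : ∀ᵐ x ∂μ.restrict Ω, gradient f x = gradient g x) : EqOn f g Ω := by
  have hd := hf.sub hg
  have hderiv : ∀ᵐ x ∂μ, x ∈ Ω → HasFDerivAt (fun y => f y - g y) (0 : E →L[ℝ] ℝ) x := by
    rw [← ae_restrict_iff' hΩo.measurableSet]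
    filter_upwards [(hf.mono subset_closure).ae_differentiableAt_of_isOpen hΩo,
      (hg.mono subset_closure).ae_differentiableAt_of_isOpen hΩo, h] with x h₁ h₂ h₃
      using hasFDerivAt_sub_zero_of_gradient_eq h₁ h₂ h₃
  have hloc : ∀ x ∈ Ω, ∀ᶠ y in 𝓝 x, f y - g y = f x - g x := fun x hx => by
    obtain ⟨r, hr, hball⟩ := Metric.isOpen_iff.mp hΩo x hx
    filter_upwards [ball_mem_nhds x hr] with y hy
    exact (hd.mono (hball.trans subset_closure)).eq_of_ae_hasFDerivAt_zero (convex_ball x r)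
      isOpen_ball (hderiv.mono fun z hz hzb => hz (hball hzb)) hy (mem_ball_self hr)
  have hzero := hΩb.eqOn_zero_of_eventually_eq hΩo hd.continuousOn hloc
    fun x hx => sub_eq_zero.mpr (hfr hx)
  exact fun x hx => sub_eq_zero.mp (hzero hx)

end Gradient

theorem Bornology.IsBounded.integrableOn_of_continuousOn_closure {X : Type*} [MetricSpace X]
    [ProperSpace X] [MeasurableSpace X] [OpensMeasurableSpace X] {μ : Measure X}
    [IsFiniteMeasureOnCompacts μ] {s : Set X} (hs : Bornology.IsBounded s) {f : X → ℝ}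
    (hf : ContinuousOn f (closure s)) : IntegrableOn f s μ :=
  (hf.integrableOn_compact hs.isCompact_closure).mono_set subset_closure

section Comparison

variable {N : ℕ} {Ω : Set (Euc N)}

def spacelikeArea (Ω : Set (Euc N)) (u : Euc N → ℝ) : ℝ :=
  ∫ x in Ω, √(1 - ‖gradient u x‖ ^ 2)

theorem Ifun_eq_spacelikeArea_add (H : Measure (Euc N)) (u : Euc N → ℝ) :
    Ifun Ω H u = spacelikeArea Ω u + ∫ x in Ω, u x ∂H := rfl

theorem spacelikeArea_sup_add_inf (hΩo : IsOpen Ω) (hΩb : Bornology.IsBounded Ω)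
    {u v : Euc N → ℝ} {Ku Kv : ℝ≥0} (hu : LipschitzOnWith Ku u Ω)
    (hv : LipschitzOnWith Kv v Ω) :
    spacelikeArea Ω (u ⊔ v) + spacelikeArea Ω (u ⊓ v) = spacelikeArea Ω u + spacelikeArea Ω v := by
  have hint := integrableOn_sqrt_one_sub_norm_gradient_sq (μ := volume) hΩb
  simp only [spacelikeArea]
  rw [← integral_add (hint _) (hint _), ← integral_add (hint _) (hint _)]
  refine integral_congr_ae ?_
  filter_upwards [ae_gradient_sup_inf hΩo hu hv] with x hx
  rcases hx with ⟨hsup, hinf⟩ | ⟨hsup, hinf⟩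
  · rw [hsup, hinf]
  · rw [hsup, hinf, add_comm]

theorem setIntegral_add_le_sup_add_inf (hΩb : Bornology.IsBounded Ω)
    {H₁ H₂ : Measure (Euc N)} [IsFiniteMeasure H₁] [IsFiniteMeasure H₂]
    (hH : ∀ ξ : Euc N → ℝ, ContinuousOn ξ (closure Ω) → (∀ x ∈ closure Ω, 0 ≤ ξ x) →
      ∫ x in Ω, ξ x ∂H₂ ≤ ∫ x in Ω, ξ x ∂H₁)
    {u v : Euc N → ℝ} (hu : ContinuousOn u (closure Ω)) (hv : ContinuousOn v (closure Ω)) :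
    ∫ x in Ω, u x ∂H₁ + ∫ x in Ω, v x ∂H₂ ≤
      ∫ x in Ω, (u ⊔ v) x ∂H₁ + ∫ x in Ω, (u ⊓ v) x ∂H₂ := by
  -- `u ⊔ v - u = v - u ⊓ v` is a nonnegative test function.
  have hφ := hH (fun x => (u ⊔ v) x - u x) ((hu.sup hv).sub hu)
    fun x _ => sub_nonneg.mpr le_sup_left
  have hφ₁ : ∫ x in Ω, ((u ⊔ v) x - u x) ∂H₁ = ∫ x in Ω, (u ⊔ v) x ∂H₁ - ∫ x in Ω, u x ∂H₁ :=
    integral_sub (hΩb.integrableOn_of_continuousOn_closure (hu.sup hv))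
      (hΩb.integrableOn_of_continuousOn_closure hu)
  have hφ₂ : ∫ x in Ω, ((u ⊔ v) x - u x) ∂H₂ = ∫ x in Ω, v x ∂H₂ - ∫ x in Ω, (u ⊓ v) x ∂H₂ := by
    rw [← integral_sub (hΩb.integrableOn_of_continuousOn_closure hv)
      (hΩb.integrableOn_of_continuousOn_closure (f := u ⊓ v) (hu.inf hv))]
    congr 1 with x
    simp only [Pi.sup_apply, Pi.inf_apply]
    linarith [max_add_min (u x) (v x)]
  linarith

theorem Ifun_add_le_Ifun_sup_add_Ifun_inf (hΩo : IsOpen Ω) (hΩb : Bornology.IsBounded Ω)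
    {H₁ H₂ : Measure (Euc N)} [IsFiniteMeasure H₁] [IsFiniteMeasure H₂]
    (hH : ∀ ξ : Euc N → ℝ, ContinuousOn ξ (closure Ω) → (∀ x ∈ closure Ω, 0 ≤ ξ x) →
      ∫ x in Ω, ξ x ∂H₂ ≤ ∫ x in Ω, ξ x ∂H₁)
    {u v : Euc N → ℝ} {Ku Kv : ℝ≥0} (hu : LipschitzOnWith Ku u (closure Ω))
    (hv : LipschitzOnWith Kv v (closure Ω)) :
    Ifun Ω H₁ u + Ifun Ω H₂ v ≤ Ifun Ω H₁ (u ⊔ v) + Ifun Ω H₂ (u ⊓ v) := by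
  simp only [Ifun_eq_spacelikeArea_add]
  linarith [spacelikeArea_sup_add_inf hΩo hΩb (hu.mono subset_closure) (hv.mono subset_closure),
    setIntegral_add_le_sup_add_inf hΩb hH hu.continuousOn hv.continuousOn]

theorem sup_mem_Xw (hΩo : IsOpen Ω) {u v w w' : Euc N → ℝ} (hu : u ∈ Xw Ω w)
    (hv : v ∈ Xw Ω w') (hw : ∀ x ∈ frontier Ω, w' x ≤ w x) : u ⊔ v ∈ Xw Ω w := by
  obtain ⟨⟨Ku, hKu⟩, hbu, hgu⟩ := hu
  obtain ⟨⟨Kv, hKv⟩, hbv, hgv⟩ := hv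
  refine ⟨⟨_, hKu.sup hKv⟩, fun x hx => ?_, ?_⟩
  · rw [Pi.sup_apply, hbu x hx, hbv x hx, sup_eq_left.mpr (hw x hx)]
  · filter_upwards [ae_gradient_sup_inf hΩo (hKu.mono subset_closure) (hKv.mono subset_closure),
      hgu, hgv] with x hx h₁ h₂
    rcases hx with ⟨h, -⟩ | ⟨h, -⟩ <;> rwa [h]

theorem inf_mem_Xw (hΩo : IsOpen Ω) {u v w w' : Euc N → ℝ} (hu : u ∈ Xw Ω w)
    (hv : v ∈ Xw Ω w') (hw : ∀ x ∈ frontier Ω, w' x ≤ w x) : u ⊓ v ∈ Xw Ω w' := by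
  obtain ⟨⟨Ku, hKu⟩, hbu, hgu⟩ := hu
  obtain ⟨⟨Kv, hKv⟩, hbv, hgv⟩ := hv
  refine ⟨⟨_, hKu.inf hKv⟩, fun x hx => ?_, ?_⟩
  · rw [Pi.inf_apply, hbu x hx, hbv x hx, inf_eq_right.mpr (hw x hx)]
  · filter_upwards [ae_gradient_sup_inf hΩo (hKu.mono subset_closure) (hKv.mono subset_closure),
      hgu, hgv] with x hx h₁ h₂
    rcases hx with ⟨-, h⟩ | ⟨-, h⟩ <;> rwa [h]

theorem midpoint_mem_Xw (hΩo : IsOpen Ω) {u v w : Euc N → ℝ} (hu : u ∈ Xw Ω w)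
    (hv : v ∈ Xw Ω w) : (fun y => 2⁻¹ * (u y + v y)) ∈ Xw Ω w := by
  obtain ⟨⟨Ku, hKu⟩, hbu, hgu⟩ := hu
  obtain ⟨⟨Kv, hKv⟩, hbv, hgv⟩ := hv
  refine ⟨⟨_, (lipschitzWith_smul (2⁻¹ : ℝ)).comp_lipschitzOnWith (hKu.add hKv)⟩,
    fun x hx => by simp only [hbu x hx, hbv x hx]; ring, ?_⟩
  filter_upwards [(hKu.mono subset_closure).ae_differentiableAt_of_isOpen hΩo,
    (hKv.mono subset_closure).ae_differentiableAt_of_isOpen hΩo, hgu, hgv] with x h₁ h₂ h₃ h₄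
  rw [gradient_midpoint h₁ h₂, norm_smul, Real.norm_of_nonneg (by norm_num)]
  linarith [norm_add_le (gradient u x) (gradient v x)]

theorem ae_gradient_eq_of_spacelikeArea_midpoint_le (hΩo : IsOpen Ω)
    (hΩb : Bornology.IsBounded Ω) {u v : Euc N → ℝ} {Ku Kv : ℝ≥0} (hKu : LipschitzOnWith Ku u Ω)
    (hgu : ∀ᵐ x ∂volume.restrict Ω, ‖gradient u x‖ ≤ 1) (hKv : LipschitzOnWith Kv v Ω)
    (hgv : ∀ᵐ x ∂volume.restrict Ω, ‖gradient v x‖ ≤ 1)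
    (h : 2 * spacelikeArea Ω (fun y => 2⁻¹ * (u y + v y)) ≤
      spacelikeArea Ω u + spacelikeArea Ω v) :
    ∀ᵐ x ∂volume.restrict Ω, gradient u x = gradient v x := by
  have hmid : ∀ᵐ x ∂volume.restrict Ω, gradient (fun y => 2⁻¹ * (u y + v y)) x =
      (2⁻¹ : ℝ) • (gradient u x + gradient v x) := by
    filter_upwards [hKu.ae_differentiableAt_of_isOpen hΩo,
      hKv.ae_differentiableAt_of_isOpen hΩo] with x h₁ h₂
      using gradient_midpoint h₁ h₂
  set gap : Euc N → ℝ := fun x => 2 * √(1 - ‖gradient (fun y => 2⁻¹ * (u y + v y)) x‖ ^ 2) -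
    (√(1 - ‖gradient u x‖ ^ 2) + √(1 - ‖gradient v x‖ ^ 2))
  have hint := integrableOn_sqrt_one_sub_norm_gradient_sq (μ := volume) hΩb
  have hgap_int : IntegrableOn gap Ω := ((hint _).const_mul 2).sub ((hint u).fun_add (hint v))
  have hgap_nonneg : 0 ≤ᵐ[volume.restrict Ω] gap := by
    filter_upwards [hmid, hgu, hgv] with x hq h₁ h₂
    simp only [gap, Pi.zero_apply, hq, sub_nonneg]
    exact sqrt_one_sub_norm_sq_add_le h₁ h₂
  have hgap_zero : ∫ x in Ω, gap x = 0 := by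
    refine le_antisymm ?_ (integral_nonneg_of_ae hgap_nonneg)
    simp only [gap]
    rw [integral_sub ((hint _).const_mul 2) ((hint u).fun_add (hint v)), integral_const_mul,
      integral_add (hint u) (hint v)]
    simp only [spacelikeArea] at h
    linarith
  filter_upwards [(integral_eq_zero_iff_of_nonneg_ae hgap_nonneg hgap_int).mp hgap_zero, hmid,
    hgu, hgv] with x h₀ hq h₁ h₂
  refine eq_of_two_mul_sqrt_one_sub_norm_sq_le h₁ h₂ ?_
  simp only [gap, Pi.zero_apply, hq, sub_eq_zero] at h₀
  exact h₀.le

theorem eqOn_of_Ifun_le_of_isMaximizer (hN : 0 < N) (hΩo : IsOpen Ω)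
    (hΩb : Bornology.IsBounded Ω) {H : Measure (Euc N)} [IsFiniteMeasure H] {u v w : Euc N → ℝ}
    (hu : u ∈ Xw Ω w) (hmax : ∀ u' ∈ Xw Ω w, Ifun Ω H u' ≤ Ifun Ω H u) (hv : v ∈ Xw Ω w)
    (hle : Ifun Ω H u ≤ Ifun Ω H v) : EqOn u v Ω := by
  have hint : ∀ {f}, f ∈ Xw Ω w → IntegrableOn f Ω H := fun ⟨⟨_, hK⟩, _⟩ =>
    hΩb.integrableOn_of_continuousOn_closure hK.continuousOn
  have hmid := hmax _ (midpoint_mem_Xw hΩo hu hv)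
  simp only [Ifun_eq_spacelikeArea_add, integral_const_mul, integral_add (hint hu) (hint hv)]
    at hmid hle
  obtain ⟨⟨Ku, hKu⟩, hbu, hgu⟩ := hu
  obtain ⟨⟨Kv, hKv⟩, hbv, hgv⟩ := hv
  have hgrad := ae_gradient_eq_of_spacelikeArea_midpoint_le hΩo hΩb (hKu.mono subset_closure) hgu
    (hKv.mono subset_closure) hgv (by linarith)
  have : Nonempty (Fin N) := ⟨⟨0, hN⟩⟩
  exact eqOn_of_ae_gradient_eq hΩb hΩo hKu hKv (fun x hx => (hbu x hx).trans (hbv x hx).symm)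
    hgrad

end Comparison

theorem statement4_general (N : ℕ) (hN : 2 ≤ N) (Ω : Set (Euc N))
    (hΩo : IsOpen Ω) (hΩb : Bornology.IsBounded Ω)
    (H₁ H₂ : Measure (Euc N)) [IsFiniteMeasure H₁] [IsFiniteMeasure H₂]
    (hH : ∀ ξ : Euc N → ℝ, ContinuousOn ξ (closure Ω) → (∀ x ∈ closure Ω, 0 ≤ ξ x) →
      ∫ x in Ω, ξ x ∂H₂ ≤ ∫ x in Ω, ξ x ∂H₁)
    (w₁ w₂ : Euc N → ℝ)
    (hw : ∀ x ∈ closure Ω, w₂ x ≤ w₁ x)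
    (u₁ u₂ : Euc N → ℝ)
    (hu₁ : u₁ ∈ Xw Ω w₁ ∧ ∀ v ∈ Xw Ω w₁, Ifun Ω H₁ v ≤ Ifun Ω H₁ u₁)
    (hu₂ : u₂ ∈ Xw Ω w₂ ∧ ∀ v ∈ Xw Ω w₂, Ifun Ω H₂ v ≤ Ifun Ω H₂ u₂) :
    ∀ x ∈ Ω, u₂ x ≤ u₁ x := by
  have hw' : ∀ x ∈ frontier Ω, w₂ x ≤ w₁ x := fun x hx => hw x (frontier_subset_closure hx)
  obtain ⟨⟨K₁, hK₁⟩, -⟩ := hu₁.1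
  obtain ⟨⟨K₂, hK₂⟩, -⟩ := hu₂.1
  have hsup := sup_mem_Xw hΩo hu₁.1 hu₂.1 hw'
  have hle : Ifun Ω H₁ u₁ ≤ Ifun Ω H₁ (u₁ ⊔ u₂) := by
    linarith [Ifun_add_le_Ifun_sup_add_Ifun_inf hΩo hΩb hH hK₁ hK₂,
      hu₂.2 _ (inf_mem_Xw hΩo hu₁.1 hu₂.1 hw')]
  have heq := eqOn_of_Ifun_le_of_isMaximizer (by omega) hΩo hΩb hu₁.1 hu₁.2 hsup hle
  intro x hx
  exact (le_sup_right : u₂ x ≤ (u₁ ⊔ u₂) x).trans (heq hx).ge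

/-- Lemma 2.2, comparison principle for maximizers with measure data. -/
theorem statement4 (N : ℕ) (hN : 2 ≤ N) (Ω : Set (Euc N))
    (hΩo : IsOpen Ω) (hΩb : Bornology.IsBounded Ω) (hΩne : Ω.Nonempty)
    (H₁ H₂ : Measure (Euc N)) [IsFiniteMeasure H₁] [IsFiniteMeasure H₂]
    (hH : ∀ ξ : Euc N → ℝ, ContinuousOn ξ (closure Ω) → (∀ x ∈ closure Ω, 0 ≤ ξ x) →
      ∫ x in Ω, ξ x ∂H₂ ≤ ∫ x in Ω, ξ x ∂H₁)
    (w₁ w₂ : Euc N → ℝ)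
    (hw₁ : ∃ K : ℝ≥0, LipschitzOnWith K w₁ (closure Ω))
    (hw₂ : ∃ K : ℝ≥0, LipschitzOnWith K w₂ (closure Ω))
    (hw : ∀ x ∈ closure Ω, w₂ x ≤ w₁ x)
    (u₁ u₂ : Euc N → ℝ)
    (hu₁ : u₁ ∈ Xw Ω w₁ ∧ ∀ v ∈ Xw Ω w₁, Ifun Ω H₁ v ≤ Ifun Ω H₁ u₁)
    (hu₂ : u₂ ∈ Xw Ω w₂ ∧ ∀ v ∈ Xw Ω w₂, Ifun Ω H₂ v ≤ Ifun Ω H₂ u₂) :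
    ∀ x ∈ Ω, u₂ x ≤ u₁ x :=
  statement4_general N hN Ω hΩo hΩb H₁ H₂ hH w₁ w₂ hw u₁ u₂ hu₁ hu₂
end
end

section
/- Let N ≥ 2, let P = {p_1, …, p_{m_0}} be a finite set of distinct points in B_R(0), and let u ∈ C^{0,1}(B_R(0)) satisfy |∇u| < 1 a.e. and |∇u|/√(1 − |∇u|²) ∈ L¹(B_R(0)). Suppose the distribution 𝒯(ξ) = ∫_{B_R(0)} ∇u·∇ξ / √(1 − |∇u|²) dx vanishes on all test functions supported in B_R(0) ∖ P, so that by Schwartz's theorem 𝒯 = Σ_{j=1}^{m_0} Σ_{|a| ≤ N_j} k_{p_j,a} D^a δ_{p_j} for some integers N_j and coefficients k_{p_j,a} ∈ ℝ, where a ranges over multi-indices. Then k_{p_j,a} = 0 for every multi-index a with |a| ≥ 1 and every j. -/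
open MeasureTheory Real Filter Topology Metric
open scoped NNReal

noncomputable section

/-! The coefficient `k_{p,a}` with `|a| ≥ 1` is read off by testing against
`ξ_δ(x) = δ^{|a|} ψ(p + δ⁻¹(x - p))`, where `ψ` equals the monomial `(x - p)^a` near `p` and is
cut off by a bump function. Near `p` the rescaled function is still `(x - p)^a`, so the
representation gives `𝒯(ξ_δ) = a! k_{p,a}`; on the other hand `|∇ξ_δ| ≤ δ^{|a|-1} sup |∇ψ|` stays
bounded and `ξ_δ` is supported in `B_δ(p)`, so `|𝒯(ξ_δ)|` is at most a constant times the integral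
of the integrable function `|∇u|/√(1-|∇u|²)` over `B_δ(p)`, which tends to `0` with `δ`.
Hence `a! k_{p,a} = 0`. -/

section Gradient

variable {F : Type*} [NormedAddCommGroup F] [InnerProductSpace ℝ F] [CompleteSpace F]

theorem norm_gradient (f : F → ℝ) (x : F) : ‖gradient f x‖ = ‖fderiv ℝ f x‖ := by
  rw [← toDual_gradient]
  exact (LinearIsometryEquiv.norm_map _ _).symm

theorem gradient_of_notMem_tsupport {f : F → ℝ} {x : F} (hx : x ∉ tsupport f) :
    gradient f x = 0 := by
  rw [← norm_eq_zero, norm_gradient, fderiv_of_notMem_tsupport ℝ hx, norm_zero]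

end Gradient

theorem abs_pairingOn_le {N : ℕ} {u ξ : Euc N → ℝ} {s K : Set (Euc N)} {M : ℝ}
    (hint : IntegrableOn (fun x => ‖gradient u x‖ / Real.sqrt (1 - ‖gradient u x‖ ^ 2)) s)
    (hK : MeasurableSet K) (hξK : tsupport ξ ⊆ K) (hM : ∀ x, ‖gradient ξ x‖ ≤ M) :
    |pairingOn u ξ s| ≤
      M * ∫ x in K ∩ s, ‖gradient u x‖ / Real.sqrt (1 - ‖gradient u x‖ ^ 2) := by
  set g := fun x => ‖gradient u x‖ / Real.sqrt (1 - ‖gradient u x‖ ^ 2)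
  have hpoint : ∀ x, ‖inner ℝ (gradient u x) (gradient ξ x) / Real.sqrt (1 - ‖gradient u x‖ ^ 2)‖
      ≤ M * K.indicator g x := by
    intro x
    by_cases hx : x ∈ K
    · rw [Set.indicator_of_mem hx, Real.norm_eq_abs, abs_div, abs_of_nonneg (Real.sqrt_nonneg _)]
      calc |inner ℝ (gradient u x) (gradient ξ x)| / Real.sqrt (1 - ‖gradient u x‖ ^ 2)
          ≤ ‖gradient u x‖ * ‖gradient ξ x‖ / Real.sqrt (1 - ‖gradient u x‖ ^ 2) := by
            gcongr
            exact abs_real_inner_le_norm _ _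
        _ = ‖gradient ξ x‖ * g x := by ring
        _ ≤ M * g x := by gcongr; exact hM x
    · simp [Set.indicator_of_notMem hx, gradient_of_notMem_tsupport fun h => hx (hξK h)]
  calc |pairingOn u ξ s|
      ≤ ∫ x in s, M * K.indicator g x :=
        norm_integral_le_of_norm_le ((hint.indicator hK).const_mul M) (ae_of_all _ hpoint)
    _ = M * ∫ x in K ∩ s, g x := by
        rw [integral_const_mul, integral_indicator hK, Measure.restrict_restrict hK]

theorem tendsto_setIntegral_closedBall_inter_nhdsGT {X : Type*} [MetricSpace X] [ProperSpace X]
    [MeasurableSpace X] [OpensMeasurableSpace X] {μ : Measure X} [IsFiniteMeasureOnCompacts μ]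
    [NullSingletonClass μ] {g : X → ℝ} {s : Set X} (hg : IntegrableOn g s μ) (q : X) :
    Tendsto (fun δ => ∫ x in closedBall q δ ∩ s, g x ∂μ) (𝓝[>] 0) (𝓝 0) := by
  have hball : Tendsto (fun δ => μ (closedBall q δ)) (𝓝[>] 0) (𝓝 0) := by
    have := tendsto_measure_biInter_gt (μ := μ) (s := closedBall q) (a := (0 : ℝ))
      (fun r _ => measurableSet_closedBall.nullMeasurableSet)
      (fun _ _ _ hij => closedBall_subset_closedBall hij)
      ⟨1, one_pos, (isCompact_closedBall q 1).measure_lt_top.ne⟩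
    rwa [biInter_gt_closedBall, closedBall_zero, measure_singleton] at this
  have hrestr : Tendsto (fun δ => μ.restrict s (closedBall q δ)) (𝓝[>] 0) (𝓝 0) :=
    tendsto_of_tendsto_of_tendsto_of_le_of_le tendsto_const_nhds hball (fun _ => zero_le)
      fun _ => Measure.restrict_apply_le _ _
  simpa only [Measure.restrict_restrict measurableSet_closedBall] using
    hg.tendsto_setIntegral_nhds_zero hrestr

section Monomial

variable {N : ℕ}

def monomialAt (q : Euc N) (a : Fin N → ℕ) (x : Euc N) : ℝ :=
  ∏ i, (x i - q i) ^ a i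

theorem contDiff_monomialAt (q : Euc N) (a : Fin N → ℕ) {n : WithTop ℕ∞} :
    ContDiff ℝ n (monomialAt q a) :=
  contDiff_prod fun i _ =>
    (((EuclideanSpace.proj i : Euc N →L[ℝ] ℝ).contDiff).sub contDiff_const).pow _

theorem monomialAt_apply_self (q : Euc N) (a : Fin N → ℕ) :
    monomialAt q a q = if a = 0 then 1 else 0 := by
  split_ifs with ha
  · simp [monomialAt, ha]
  · obtain ⟨i, hi⟩ := Function.ne_iff.mp ha
    exact Finset.prod_eq_zero (Finset.mem_univ i) (by simp [zero_pow hi])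

theorem monomialAt_homothety (q : Euc N) (a : Fin N → ℕ) (c : ℝ) (x : Euc N) :
    monomialAt q a (q + c • (x - q)) = c ^ (∑ i, a i) * monomialAt q a x := by
  simp only [monomialAt, PiLp.add_apply, PiLp.smul_apply, PiLp.sub_apply, smul_eq_mul,
    add_sub_cancel_left, mul_pow, Finset.prod_mul_distrib, Finset.prod_pow_eq_pow_sum]

theorem monomialAt_update (q : Euc N) (a : Fin N → ℕ) (i : Fin N) (m : ℕ) (x : Euc N) :
    monomialAt q (Function.update a i m) x =
      (x i - q i) ^ m * ∏ j ∈ Finset.univ.erase i, (x j - q j) ^ a j := by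
  rw [monomialAt, ← Finset.mul_prod_erase _ _ (Finset.mem_univ i), Function.update_self]
  congr 1
  exact Finset.prod_congr rfl fun j hj => by rw [Function.update_of_ne (Finset.ne_of_mem_erase hj)]

theorem dirDeriv_monomialAt (q : Euc N) (a : Fin N → ℕ) (i : Fin N) :
    dirDeriv i (monomialAt q a) = (a i : ℝ) • monomialAt q (Function.update a i (a i - 1)) := by
  ext x
  have hfactor : ∀ j ∈ Finset.univ, HasFDerivAt (fun y : Euc N => (y j - q j) ^ a j)
      ((a j * (x j - q j) ^ (a j - 1)) • (EuclideanSpace.proj j : Euc N →L[ℝ] ℝ)) x :=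
    fun j _ => (hasDerivAt_pow (a j) (x j - q j)).comp_hasFDerivAt x
      (((EuclideanSpace.proj j : Euc N →L[ℝ] ℝ).hasFDerivAt).sub_const (q j))
  have hprod : HasFDerivAt (monomialAt q a) _ x := HasFDerivAt.finsetProd hfactor
  rw [dirDeriv, hprod.fderiv, Pi.smul_apply, monomialAt_update]
  simp [EuclideanSpace.proj, PiLp.single_apply]
  ring

theorem dirDeriv_const_smul (i : Fin N) (c : ℝ) (f : Euc N → ℝ) :
    dirDeriv i (c • f) = c • dirDeriv i f := by
  ext x
  simp [dirDeriv, fderiv_const_smul_field]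

theorem iterate_dirDeriv_smul_monomialAt (q : Euc N) (i : Fin N) (n : ℕ) (c : ℝ)
    (a : Fin N → ℕ) :
    (dirDeriv i)^[n] (c • monomialAt q a) =
      (c * (a i).descFactorial n) • monomialAt q (Function.update a i (a i - n)) := by
  induction n with
  | zero => simp
  | succ n ih =>
    rw [Function.iterate_succ_apply', ih, dirDeriv_const_smul, dirDeriv_monomialAt, smul_smul,
      Function.update_idem, Function.update_self, Nat.descFactorial_succ, Nat.sub_sub]
    congr 1
    push_cast
    ring

theorem foldr_iterate_dirDeriv_smul_monomialAt (q : Euc N) (b : Fin N → ℕ) (L : List (Fin N))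
    (hL : L.Nodup) (c : ℝ) (a : Fin N → ℕ) :
    L.foldr (fun i g => (dirDeriv i)^[b i] g) (c • monomialAt q a) =
      (c * ∏ i ∈ L.toFinset, ((a i).descFactorial (b i) : ℝ)) •
        monomialAt q (fun i => if i ∈ L then a i - b i else a i) := by
  induction L with
  | nil => simp
  | cons i L ih =>
    obtain ⟨hiL, hLnd⟩ := List.nodup_cons.mp hL
    rw [List.foldr_cons, ih hLnd, iterate_dirDeriv_smul_monomialAt, List.toFinset_cons,
      Finset.prod_insert (by simpa using hiL)]
    congr 1
    · simp only [if_neg hiL]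
      ring
    · congr 1
      ext j
      by_cases hji : j = i
      · subst hji; simp [hiL]
      · simp [hji]

theorem multiDeriv_smul_monomialAt (q : Euc N) (b : Fin N → ℕ) (c : ℝ) (a : Fin N → ℕ) :
    multiDeriv b (c • monomialAt q a) =
      (c * ∏ i, ((a i).descFactorial (b i) : ℝ)) • monomialAt q (a - b) := by
  rw [multiDeriv, foldr_iterate_dirDeriv_smul_monomialAt q b _ (List.nodup_finRange N)]
  simp only [List.toFinset_finRange, List.mem_finRange, if_true]
  rfl

theorem multiDeriv_monomialAt_apply_self (q : Euc N) (a b : Fin N → ℕ) :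
    multiDeriv b (monomialAt q a) q = if b = a then ∏ i, ((a i).factorial : ℝ) else 0 := by
  have h := congrFun (multiDeriv_smul_monomialAt q b 1 a) q
  rw [one_smul] at h
  rw [h, Pi.smul_apply, monomialAt_apply_self, smul_eq_mul, one_mul]
  by_cases hba : b = a
  · subst hba
    simp [Nat.descFactorial_self]
  · obtain ⟨i, hi⟩ := Function.ne_iff.mp hba
    rw [if_neg hba]
    rcases lt_or_gt_of_ne hi with hlt | hlt
    · have hsub : a - b ≠ 0 := fun h0 => by
        have := congrFun h0 i
        simp only [Pi.sub_apply, Pi.zero_apply] at this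
        omega
      simp [hsub]
    · have hzero : ((a i).descFactorial (b i) : ℝ) = 0 := by
        exact_mod_cast Nat.descFactorial_eq_zero_iff_lt.mpr hlt
      simp [Finset.prod_eq_zero (f := fun i => ((a i).descFactorial (b i) : ℝ))
        (Finset.mem_univ i) hzero]

theorem multiDeriv_zero (b : Fin N → ℕ) : multiDeriv b (0 : Euc N → ℝ) = 0 := by
  rw [multiDeriv]
  induction List.finRange N with
  | nil => rfl
  | cons i L ih =>
    rw [List.foldr_cons, ih]
    exact Function.iterate_fixed (by ext; simp [dirDeriv]) _

theorem multiDeriv_congr {f g : Euc N → ℝ} {x : Euc N} (b : Fin N → ℕ) (h : f =ᶠ[𝓝 x] g) :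
    multiDeriv b f =ᶠ[𝓝 x] multiDeriv b g := by
  rw [multiDeriv, multiDeriv]
  induction List.finRange N with
  | nil => exact h
  | cons i L ih =>
    simp only [List.foldr_cons]
    induction b i with
    | zero => exact ih
    | succ n ihn =>
      simp only [Function.iterate_succ_apply']
      filter_upwards [ihn.fderiv (𝕜 := ℝ)] with y hy
      simp only [dirDeriv, hy]

end Monomial

section Rescale

variable {E : Type*} [NormedAddCommGroup E] [NormedSpace ℝ E]

def rescaleAt (q : E) (s : ℕ) (δ : ℝ) (ψ : E → ℝ) : E → ℝ :=
  fun x => δ ^ s * ψ (q + δ⁻¹ • (x - q))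

theorem dist_add_smul_sub_self (q x : E) (c : ℝ) :
    dist (q + c • (x - q)) q = |c| * dist x q := by
  rw [dist_self_add_left, norm_smul, Real.norm_eq_abs, dist_eq_norm]

theorem contDiff_rescaleAt {n : WithTop ℕ∞} {ψ : E → ℝ} (hψ : ContDiff ℝ n ψ) (q : E) (s : ℕ)
    (δ : ℝ) : ContDiff ℝ n (rescaleAt q s δ ψ) :=
  contDiff_const.mul (hψ.comp (by fun_prop))

theorem tsupport_rescaleAt_subset {ψ : E → ℝ} {q : E} {r δ : ℝ}
    (hψ : Function.support ψ ⊆ closedBall q r) (hδ : 0 < δ) (s : ℕ) :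
    tsupport (rescaleAt q s δ ψ) ⊆ closedBall q (δ * r) := by
  refine closure_minimal (fun x hx => ?_) isClosed_closedBall
  have hA := hψ (right_ne_zero_of_mul hx)
  rw [mem_closedBall, dist_add_smul_sub_self, abs_of_pos (inv_pos.mpr hδ)] at hA
  rw [mem_closedBall]
  calc dist x q = δ * (δ⁻¹ * dist x q) := by field_simp
    _ ≤ δ * r := by gcongr

theorem norm_fderiv_rescaleAt_le {ψ : E → ℝ} {M : ℝ} (hψ : Differentiable ℝ ψ)
    (hM : ∀ y, ‖fderiv ℝ ψ y‖ ≤ M) (q : E) (s : ℕ) {δ : ℝ} (hδ : 0 < δ) (x : E) :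
    ‖fderiv ℝ (rescaleAt q s δ ψ) x‖ ≤ δ ^ s * δ⁻¹ * M := by
  set A : E → E := fun y => q + δ⁻¹ • (y - q)
  have hA : HasFDerivAt A (δ⁻¹ • ContinuousLinearMap.id ℝ E) x :=
    (((hasFDerivAt_id x).sub_const q).const_smul δ⁻¹).const_add q
  have hderiv := ((hψ (A x)).hasFDerivAt.comp x hA).const_mul (δ ^ s)
  have hid : ‖δ⁻¹ • ContinuousLinearMap.id ℝ E‖ ≤ δ⁻¹ := by
    calc _ ≤ ‖δ⁻¹‖ * ‖ContinuousLinearMap.id ℝ E‖ := norm_smul_le _ _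
      _ ≤ ‖δ⁻¹‖ * 1 := by gcongr; exact ContinuousLinearMap.norm_id_le
      _ = δ⁻¹ := by rw [mul_one, Real.norm_of_nonneg (inv_nonneg.mpr hδ.le)]
  rw [show rescaleAt q s δ ψ = fun y => δ ^ s * (ψ ∘ A) y from rfl, hderiv.fderiv]
  calc _ ≤ ‖δ ^ s‖ * ‖(fderiv ℝ ψ (A x)).comp (δ⁻¹ • ContinuousLinearMap.id ℝ E)‖ :=
        norm_smul_le _ _
    _ ≤ δ ^ s * (M * δ⁻¹) := by
        rw [Real.norm_of_nonneg (by positivity)]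
        gcongr
        calc _ ≤ ‖fderiv ℝ ψ (A x)‖ * ‖δ⁻¹ • ContinuousLinearMap.id ℝ E‖ :=
              ContinuousLinearMap.opNorm_comp_le _ _
          _ ≤ M * δ⁻¹ := mul_le_mul (hM _) hid (norm_nonneg _) ((norm_nonneg _).trans (hM x))
    _ = δ ^ s * δ⁻¹ * M := by ring

end Rescale

theorem exists_contDiff_support_subset_eqOn_monomialAt {N : ℕ} (q : Euc N) (a : Fin N → ℕ) :
    ∃ ψ : Euc N → ℝ, ContDiff ℝ (⊤ : ℕ∞) ψ ∧ Function.support ψ ⊆ closedBall q 1 ∧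
      Set.EqOn ψ (monomialAt q a) (closedBall q (1 / 2)) := by
  let χ : ContDiffBump q := ⟨1 / 2, 1, by norm_num, by norm_num⟩
  refine ⟨fun x => monomialAt q a x * χ x, (contDiff_monomialAt q a).mul χ.contDiff, ?_,
    fun y hy => by simp [χ.one_of_mem_closedBall hy]⟩
  exact (Function.support_mul_subset_right _ _).trans
    (χ.support_eq.trans_subset ball_subset_closedBall)

theorem exists_smooth_eq_monomialAt_near {N : ℕ} (q : Euc N) {a : Fin N → ℕ}
    (ha : 1 ≤ ∑ i, a i) :
    ∃ M : ℝ, ∀ δ ∈ Set.Ioc (0 : ℝ) 1, ∃ ξ : Euc N → ℝ,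
      ContDiff ℝ (⊤ : ℕ∞) ξ ∧ HasCompactSupport ξ ∧ tsupport ξ ⊆ closedBall q δ ∧
        ξ =ᶠ[𝓝 q] monomialAt q a ∧ ∀ x, ‖gradient ξ x‖ ≤ M := by
  obtain ⟨ψ, hψ, hψ_supp, hψ_eq⟩ := exists_contDiff_support_subset_eqOn_monomialAt q a
  have hψ_cpt : HasCompactSupport ψ :=
    .of_support_subset_isCompact (isCompact_closedBall q 1) hψ_supp
  obtain ⟨M, hM⟩ := hψ_cpt.fderiv (𝕜 := ℝ) |>.exists_bound_of_continuous
    (hψ.continuous_fderiv (by simp))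
  refine ⟨M, fun δ ⟨hδ0, hδ1⟩ => ⟨rescaleAt q (∑ i, a i) δ ψ, contDiff_rescaleAt hψ _ _ _, ?_⟩⟩
  have hts : tsupport (rescaleAt q (∑ i, a i) δ ψ) ⊆ closedBall q δ := by
    simpa using tsupport_rescaleAt_subset hψ_supp hδ0 (∑ i, a i)
  refine ⟨(isCompact_closedBall q δ).of_isClosed_subset (isClosed_tsupport _) hts, hts, ?_, ?_⟩
  · filter_upwards [ball_mem_nhds q (half_pos hδ0)] with x hx
    have hAx : q + δ⁻¹ • (x - q) ∈ closedBall q (1 / 2) := by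
      rw [mem_closedBall, dist_add_smul_sub_self, abs_of_pos (inv_pos.mpr hδ0)]
      rw [mem_ball] at hx
      calc δ⁻¹ * dist x q ≤ δ⁻¹ * (δ / 2) := by gcongr
        _ = 1 / 2 := by field_simp
    simp only [rescaleAt]
    rw [hψ_eq hAx, monomialAt_homothety, ← mul_assoc, ← mul_pow, mul_inv_cancel₀ hδ0.ne',
      one_pow, one_mul]
  · intro x
    have hδs : δ ^ (∑ i, a i) * δ⁻¹ ≤ 1 :=
      calc δ ^ (∑ i, a i) * δ⁻¹ ≤ δ * δ⁻¹ := by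
            gcongr
            exact pow_le_of_le_one hδ0.le hδ1 (by omega)
        _ = 1 := mul_inv_cancel₀ hδ0.ne'
    rw [norm_gradient]
    exact (norm_fderiv_rescaleAt_le (hψ.differentiable (by simp)) hM q _ hδ0 x).trans
      (mul_le_of_le_one_left ((norm_nonneg _).trans (hM q)) hδs)

theorem sum_coeff_multiDeriv_eq_of_eventuallyEq {N m : ℕ} {p : Fin m → Euc N}
    {A : Fin m → Finset (Fin N → ℕ)} (k : Fin m → (Fin N → ℕ) → ℝ) {ξ : Euc N → ℝ} {j : Fin m}
    {a : Fin N → ℕ} (ha : a ∈ A j) (hξ : ξ =ᶠ[𝓝 (p j)] monomialAt (p j) a)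
    (hξ_zero : ∀ j' ≠ j, ξ =ᶠ[𝓝 (p j')] 0) :
    ∑ j', ∑ b ∈ A j', k j' b * multiDeriv b ξ (p j') = k j a * ∏ i, ((a i).factorial : ℝ) := by
  rw [Finset.sum_eq_single_of_mem j (Finset.mem_univ j) fun j' _ hj' => ?_]
  · rw [Finset.sum_eq_single_of_mem a ha fun b _ hba => ?_]
    · rw [(multiDeriv_congr a hξ).eq_of_nhds, multiDeriv_monomialAt_apply_self, if_pos rfl]
    · rw [(multiDeriv_congr b hξ).eq_of_nhds, multiDeriv_monomialAt_apply_self, if_neg hba,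
        mul_zero]
  · refine Finset.sum_eq_zero fun b _ => ?_
    rw [(multiDeriv_congr b (hξ_zero j' hj')).eq_of_nhds, multiDeriv_zero, Pi.zero_apply, mul_zero]

theorem statement10_general (N m0 : ℕ) (R : ℝ)
    (p : Fin m0 → Euc N) (hp : Function.Injective p)
    (hpin : ∀ j, p j ∈ ball (0 : Euc N) R)
    (u : Euc N → ℝ)
    (hint : IntegrableOn (fun x => ‖gradient u x‖ / Real.sqrt (1 - ‖gradient u x‖ ^ 2))
      (ball 0 R) volume)
    (A : Fin m0 → Finset (Fin N → ℕ)) (k : Fin m0 → (Fin N → ℕ) → ℝ)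
    (hrep : ∀ ξ : Euc N → ℝ, ContDiff ℝ (⊤ : ℕ∞) ξ → HasCompactSupport ξ →
      tsupport ξ ⊆ ball 0 R →
      pairingOn u ξ (ball 0 R) = ∑ j, ∑ a ∈ A j, k j a * multiDeriv a ξ (p j)) :
    ∀ j, ∀ a ∈ A j, 1 ≤ ∑ i, a i → k j a = 0 := by
  intro j a ha ha1
  obtain ⟨r, hr, hr_sub⟩ : ∃ r > 0, ball (p j) r ⊆ ball 0 R \ p '' {j}ᶜ :=
    Metric.isOpen_iff.mp (isOpen_ball.sdiff ((Set.toFinite _).image p).isClosed) _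
      ⟨hpin j, fun ⟨_, hj', h⟩ => hj' (hp h)⟩
  obtain ⟨M, hξ⟩ := exists_smooth_eq_monomialAt_near (p j) ha1
  have hbound : ∀ δ ∈ Set.Ioo 0 (min r 1), |k j a * ∏ i, ((a i).factorial : ℝ)| ≤
      M * ∫ x in closedBall (p j) δ ∩ ball 0 R,
        ‖gradient u x‖ / Real.sqrt (1 - ‖gradient u x‖ ^ 2) := by
    rintro δ ⟨hδ0, hδ⟩
    obtain ⟨ξ, hξ_smooth, hξ_cpt, hξ_supp, hξ_eq, hξ_grad⟩ :=
      hξ δ ⟨hδ0, hδ.le.trans (min_le_right _ _)⟩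
    have hδr : closedBall (p j) δ ⊆ ball 0 R \ p '' {j}ᶜ :=
      (closedBall_subset_ball (hδ.trans_le (min_le_left _ _))).trans hr_sub
    have hξ_zero : ∀ j' ≠ j, ξ =ᶠ[𝓝 (p j')] 0 := fun j' hj' =>
      notMem_tsupport_iff_eventuallyEq.mp fun h => (hδr (hξ_supp h)).2 ⟨j', hj', rfl⟩
    rw [← sum_coeff_multiDeriv_eq_of_eventuallyEq k ha hξ_eq hξ_zero,
      ← hrep ξ hξ_smooth hξ_cpt (hξ_supp.trans (hδr.trans Set.sdiff_subset))]
    exact abs_pairingOn_le hint measurableSet_closedBall hξ_supp hξ_grad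
  obtain ⟨i, -⟩ := Finset.exists_ne_zero_of_sum_ne_zero (by omega : ∑ i, a i ≠ 0)
  -- points are null for `volume` on `ℝ^N` only when `N ≥ 1`
  have : Nonempty (Fin N) := ⟨i⟩
  have hlim := (tendsto_setIntegral_closedBall_inter_nhdsGT hint (p j)).const_mul M
  rw [mul_zero] at hlim
  have hcoeff := ge_of_tendsto hlim
    (Filter.mem_of_superset (Ioo_mem_nhdsGT (lt_min hr one_pos)) hbound)
  have hfact : ∏ i, ((a i).factorial : ℝ) ≠ 0 :=
    Finset.prod_ne_zero_iff.mpr fun i _ => Nat.cast_ne_zero.mpr (Nat.factorial_ne_zero _)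
  exact (mul_eq_zero.mp (abs_nonpos_iff.mp hcoeff)).resolve_right hfact

/-- Lemma 2.10: in the Schwartz representation of the distribution
`ξ ↦ ∫ ∇u·∇ξ/√(1-|∇u|²)`, all coefficients of derivatives of Dirac masses of order `≥ 1`
vanish. -/
theorem statement10 (N m0 : ℕ) (hN : 2 ≤ N) (R : ℝ) (hR : 0 < R)
    (p : Fin m0 → Euc N) (hp : Function.Injective p)
    (hpin : ∀ j, p j ∈ ball (0 : Euc N) R)
    (u : Euc N → ℝ) (hlip : ∃ K : ℝ≥0, LipschitzOnWith K u (ball 0 R))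
    (hgrad : ∀ᵐ x ∂volume.restrict (ball (0 : Euc N) R), ‖gradient u x‖ < 1)
    (hint : IntegrableOn (fun x => ‖gradient u x‖ / Real.sqrt (1 - ‖gradient u x‖ ^ 2))
      (ball 0 R) volume)
    (A : Fin m0 → Finset (Fin N → ℕ)) (k : Fin m0 → (Fin N → ℕ) → ℝ)
    (hvanish : ∀ ξ : Euc N → ℝ, ContDiff ℝ (⊤ : ℕ∞) ξ → HasCompactSupport ξ →
      tsupport ξ ⊆ ball 0 R → (∀ j, p j ∉ tsupport ξ) →
      pairingOn u ξ (ball 0 R) = 0)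
    (hrep : ∀ ξ : Euc N → ℝ, ContDiff ℝ (⊤ : ℕ∞) ξ → HasCompactSupport ξ →
      tsupport ξ ⊆ ball 0 R →
      pairingOn u ξ (ball 0 R) = ∑ j, ∑ a ∈ A j, k j a * multiDeriv a ξ (p j)) :
    ∀ j, ∀ a ∈ A j, 1 ≤ ∑ i, a i → k j a = 0 :=
  statement10_general N m0 R p hp hpin u hint A k hrep
end
end

section
/- Let α > 0 and define, for r = |x| > 0, Φ_{2,α}(x) = −(α/(2π)) ( ln( r + √((α/(2π))² + r²) ) − ln(α/(2π)) ). Then Φ_{2,α} is a weak solution of ℳ₀u = α δ_0 in ℝ² with u(0) = 0: Φ_{2,α} is C² on ℝ² ∖ {0} with |∇Φ_{2,α}| < 1 there, ℳ₀Φ_{2,α} = 0 classically on ℝ² ∖ {0}, and ∫_{ℝ²} ∇Φ_{2,α}·∇φ / √(1 − |∇Φ_{2,α}|²) dx = α φ(0) for every φ ∈ C¹_c(ℝ²). Moreover |∇Φ_{2,α}(x)| → 1 and ∇Φ_{2,α}(x)·(x/|x|) → −1 as |x| → 0⁺. -/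
open MeasureTheory Real Filter Topology Metric
open scoped NNReal

noncomputable section

/-!
Write `a = α / (2π)`. Then `Φ_{2,α}(x) = -a arsinh (|x| / a)`, so
`∇Φ_{2,α}(x) = -(1 + |x|² / a²)^(-1/2) x / |x|`, and the Lorentz–Minkowski flux
`∇Φ / √(1 - |∇Φ|²)` is exactly `-a x / |x|²`: the flux of the Newtonian potential of the plane,
which is divergence free away from the origin. Pairing it with `∇φ` and passing to polar
coordinates, each ray contributes `∫₀^∞ ∂ᵣφ(r ω) dr = -φ 0`, and the unit circle has length
`2π`, which gives `α φ 0`.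
-/

theorem Real.arsinh_div_eq_log_sub_log {a : ℝ} (ha : 0 < a) (r : ℝ) :
    arsinh (r / a) = log (r + √(a ^ 2 + r ^ 2)) - log a := by
  have hsqrt : √(1 + (r / a) ^ 2) = √(a ^ 2 + r ^ 2) / a := by
    rw [div_pow, one_add_div (by positivity), Real.sqrt_div' _ (by positivity),
      Real.sqrt_sq ha.le, add_comm]
  rw [eq_sub_iff_add_eq, ← Real.log_exp (arsinh _), ← Real.log_mul (exp_pos _).ne' ha.ne',
    exp_arsinh, hsqrt, ← add_div, div_mul_cancel₀ _ ha.ne']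

theorem Real.hasDerivAt_neg_mul_arsinh_div {a : ℝ} (ha : a ≠ 0) (r : ℝ) :
    HasDerivAt (fun r => -a * arsinh (r / a)) (-(√(1 + (r / a) ^ 2))⁻¹) r := by
  refine (((Real.hasDerivAt_arsinh _).comp r ((hasDerivAt_id r).div_const a)).const_mul
    (-a)).congr_deriv ?_
  simp only [id]
  field_simp

theorem Real.inv_sqrt_one_add_sq_lt_one {t : ℝ} (ht : t ≠ 0) : (√(1 + t ^ 2))⁻¹ < 1 :=
  inv_lt_one_of_one_lt₀ (Real.lt_sqrt_of_sq_lt (by nlinarith [sq_pos_of_ne_zero ht]))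

theorem Real.sqrt_one_sub_inv_sqrt_one_add_sq_sq {t : ℝ} (ht : 0 ≤ t) :
    √(1 - (√(1 + t ^ 2))⁻¹ ^ 2) = t / √(1 + t ^ 2) := by
  have h : 1 - (√(1 + t ^ 2))⁻¹ ^ 2 = (t / √(1 + t ^ 2)) ^ 2 := by
    field_simp
    rw [Real.sq_sqrt (by positivity)]
    ring
  rw [h, Real.sqrt_sq (by positivity)]

theorem tendsto_inv_sqrt_one_add_norm_div_sq {F : Type*} [SeminormedAddCommGroup F] (a : ℝ) :
    Tendsto (fun x : F => (√(1 + (‖x‖ / a) ^ 2))⁻¹) (𝓝 0) (𝓝 1) := by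
  have h : Tendsto (fun x : F => ‖x‖ / a) (𝓝 0) (𝓝 0) := by
    simpa using tendsto_norm_zero.div_const a
  simpa using ((h.pow 2).const_add 1).sqrt.inv₀ (by simp)

section RadialArsinh

variable {F : Type*} [NormedAddCommGroup F] [InnerProductSpace ℝ F] [CompleteSpace F]
  {a : ℝ} {x : F}

theorem hasGradientAt_comp_norm {f : ℝ → ℝ} {f' : ℝ} (hx : x ≠ 0) (hf : HasDerivAt f f' ‖x‖) :
    HasGradientAt (fun y => f ‖y‖) ((f' * ‖x‖⁻¹) • x) x := by
  have hnorm : HasFDerivAt (fun y : F => √(‖y‖ ^ 2))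
      ((1 / (2 * √(‖x‖ ^ 2))) • 2 • innerSL ℝ x) x :=
    (Real.hasDerivAt_sqrt (by positivity)).comp_hasFDerivAt x
      (hasStrictFDerivAt_norm_sq x).hasFDerivAt
  simp only [Real.sqrt_sq (norm_nonneg _)] at hnorm
  rw [hasGradientAt_iff_hasFDerivAt]
  refine (hf.comp_hasFDerivAt x hnorm).congr_fderiv ?_
  ext v
  simp only [smul_apply, coe_innerSL_apply, nsmul_eq_mul, Nat.cast_ofNat, smul_eq_mul,
    InnerProductSpace.toDual_apply_apply, real_inner_smul_left]
  field_simp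

theorem gradient_arsinh_norm (ha : 0 < a) (hx : x ≠ 0) :
    gradient (fun y : F => -a * arsinh (‖y‖ / a)) x
      = (-(√(1 + (‖x‖ / a) ^ 2))⁻¹ * ‖x‖⁻¹) • x :=
  (hasGradientAt_comp_norm hx (Real.hasDerivAt_neg_mul_arsinh_div ha.ne' _)).gradient

theorem norm_gradient_arsinh_norm (ha : 0 < a) (hx : x ≠ 0) :
    ‖gradient (fun y : F => -a * arsinh (‖y‖ / a)) x‖ = (√(1 + (‖x‖ / a) ^ 2))⁻¹ := by
  rw [gradient_arsinh_norm ha hx, norm_smul, norm_mul, norm_neg, norm_inv, norm_inv, norm_norm,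
    Real.norm_of_nonneg (by positivity)]
  field_simp [norm_ne_zero_iff.2 hx]

theorem inner_gradient_arsinh_norm (ha : 0 < a) (hx : x ≠ 0) :
    inner ℝ (gradient (fun y : F => -a * arsinh (‖y‖ / a)) x) (‖x‖⁻¹ • x)
      = -(√(1 + (‖x‖ / a) ^ 2))⁻¹ := by
  rw [gradient_arsinh_norm ha hx, real_inner_smul_left, real_inner_smul_right,
    real_inner_self_eq_norm_sq]
  field_simp [norm_ne_zero_iff.2 hx]

theorem lorentzFlux_arsinh_norm (ha : 0 < a) (hx : x ≠ 0) :
    (√(1 - ‖gradient (fun y : F => -a * arsinh (‖y‖ / a)) x‖ ^ 2))⁻¹ •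
        gradient (fun y : F => -a * arsinh (‖y‖ / a)) x
      = (-a * (‖x‖ ^ 2)⁻¹) • x := by
  rw [norm_gradient_arsinh_norm ha hx, Real.sqrt_one_sub_inv_sqrt_one_add_sq_sq (by positivity),
    gradient_arsinh_norm ha hx, smul_smul]
  congr 1
  field_simp

theorem tendsto_norm_gradient_arsinh_norm (ha : 0 < a) :
    Tendsto (fun x => ‖gradient (fun y : F => -a * arsinh (‖y‖ / a)) x‖) (𝓝[≠] 0) (𝓝 1) :=
  ((tendsto_inv_sqrt_one_add_norm_div_sq a).mono_left nhdsWithin_le_nhds).congr'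
    (eventually_nhdsWithin_of_forall fun _ hx => (norm_gradient_arsinh_norm ha hx).symm)

theorem tendsto_inner_gradient_arsinh_norm (ha : 0 < a) :
    Tendsto (fun x => inner ℝ (gradient (fun y : F => -a * arsinh (‖y‖ / a)) x) (‖x‖⁻¹ • x))
      (𝓝[≠] 0) (𝓝 (-1)) :=
  ((tendsto_inv_sqrt_one_add_norm_div_sq a).neg.mono_left nhdsWithin_le_nhds).congr'
    (eventually_nhdsWithin_of_forall fun _ hx => (inner_gradient_arsinh_norm ha hx).symm)

end RadialArsinh

theorem vdiv_inv_norm_sq_smul {N : ℕ} (c : ℝ) {x : Euc N} (hx : x ≠ 0) :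
    vdiv (fun y => (c * (‖y‖ ^ 2)⁻¹) • y) x = c * (N - 2) / ‖x‖ ^ 2 := by
  have hq : ‖x‖ ^ 2 ≠ 0 := by positivity
  have hV : HasFDerivAt (fun y : Euc N => (c * (‖y‖ ^ 2)⁻¹) • y) _ x :=
    (((hasDerivAt_inv hq).comp_hasFDerivAt x
      (hasStrictFDerivAt_norm_sq x).hasFDerivAt).const_mul c).smul (hasFDerivAt_id x)
  have hsum := (EuclideanSpace.basisFun (Fin N) ℝ).sum_sq_inner_left x
  simp only [EuclideanSpace.basisFun_apply] at hsum
  rw [vdiv, hV.fderiv]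
  calc _ = ∑ i : Fin N, (c * (‖x‖ ^ 2)⁻¹ - 2 * c * ((‖x‖ ^ 2) ^ 2)⁻¹ *
        inner ℝ x (EuclideanSpace.single i (1 : ℝ)) ^ 2) := by
        refine Finset.sum_congr rfl fun i _ => ?_
        simp only [add_apply, smul_apply, ContinuousLinearMap.id_apply,
          ContinuousLinearMap.smulRight_apply, Function.comp_apply, coe_innerSL_apply, smul_eq_mul,
          nsmul_eq_mul, inner_add_left, real_inner_smul_left, real_inner_self_eq_norm_sq,
          PiLp.norm_single, norm_one]
        ring
    _ = _ := by
        rw [Finset.sum_sub_distrib, ← Finset.mul_sum, ← Finset.mul_sum, hsum]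
        simp only [Finset.sum_const, Finset.card_univ, Fintype.card_fin, nsmul_eq_mul]
        field_simp

theorem MC_arsinh_norm {N : ℕ} {a : ℝ} (ha : 0 < a) {x : Euc N} (hx : x ≠ 0) :
    MC (fun y => -a * arsinh (‖y‖ / a)) x = a * (N - 2) / ‖x‖ ^ 2 := by
  have hflux : (fun y => (√(1 - ‖gradient (fun y : Euc N => -a * arsinh (‖y‖ / a)) y‖ ^ 2))⁻¹ •
      gradient (fun y : Euc N => -a * arsinh (‖y‖ / a)) y) =ᶠ[𝓝 x]
      fun y => (-a * (‖y‖ ^ 2)⁻¹) • y := by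
    filter_upwards [isOpen_compl_singleton.mem_nhds hx] with y hy
    exact lorentzFlux_arsinh_norm ha hy
  rw [MC, vdiv, hflux.fderiv_eq, ← vdiv, vdiv_inv_norm_sq_smul _ hx]
  ring

section Polar

variable {E G : Type*} [NormedAddCommGroup E] [NormedSpace ℝ E] [NormedAddCommGroup G]
  [NormedSpace ℝ G]

theorem integral_volumeIoiPow (n : ℕ) (f : ℝ → G) :
    ∫ r, f r ∂Measure.volumeIoiPow n = ∫ r in Set.Ioi (0 : ℝ), r ^ n • f r := by
  simp only [Measure.volumeIoiPow, ENNReal.ofReal]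
  rw [integral_withDensity_eq_integral_smul,
    integral_subtype_comap measurableSet_Ioi fun a ↦ Real.toNNReal (a ^ n) • f a,
    setIntegral_congr_fun measurableSet_Ioi fun x hx ↦ ?_]
  · rw [NNReal.smul_def, Real.coe_toNNReal _ (pow_nonneg hx.out.le _)]
  · exact (measurable_subtype_coe.pow_const _).real_toNNReal

theorem integral_Ioi_fderiv_smul_eq_neg [CompleteSpace G] {φ : E → G}
    (hφ : ContDiff ℝ 1 φ) (hφc : HasCompactSupport φ) {v : E} (hv : v ≠ 0) :
    ∫ r in Set.Ioi (0 : ℝ), fderiv ℝ φ (r • v) v = -φ 0 := by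
  have hline := isClosedEmbedding_smul_left (𝕜 := ℝ) hv
  have hderiv : ∀ r : ℝ, HasDerivAt (fun r : ℝ => φ (r • v)) (fderiv ℝ φ (r • v) v) r := by
    intro r
    have := ((hφ.differentiable one_ne_zero) (r • v)).hasFDerivAt.comp_hasDerivAt r
      ((hasDerivAt_id r).smul_const v)
    simpa [Function.comp_def] using this
  have hsupp : HasCompactSupport fun r : ℝ => fderiv ℝ φ (r • v) v :=
    ((hφc.fderiv (𝕜 := ℝ)).comp_isClosedEmbedding hline).comp_left
      (g := fun L : E →L[ℝ] G => L v) rfl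
  have hint : Integrable fun r : ℝ => fderiv ℝ φ (r • v) v :=
    (((hφ.continuous_fderiv one_ne_zero).comp (continuous_id.smul continuous_const)).clm_apply
      continuous_const).integrable_of_hasCompactSupport hsupp
  have hlim : Tendsto (fun r : ℝ => φ (r • v)) atTop (𝓝 0) :=
    (hφc.comp_isClosedEmbedding hline).is_zero_at_infty.mono_left atTop_le_cocompact
  simpa using integral_Ioi_of_hasDerivAt_of_tendsto' (a := 0) (fun r _ => hderiv r)
    hint.integrableOn hlim

variable [FiniteDimensional ℝ E] [Nontrivial E] [MeasurableSpace E] [BorelSpace E]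
  (μ : Measure E) [μ.IsAddHaarMeasure]

theorem integral_eq_integral_toSphere_integral_Ioi {g : E → G} (hg : Integrable g μ) :
    ∫ x, g x ∂μ = ∫ ω, (∫ r in Set.Ioi (0 : ℝ),
      r ^ (Module.finrank ℝ E - 1) • g (r • (ω : E))) ∂μ.toSphere := by
  have hmp := μ.measurePreserving_homeomorphUnitSphereProd
  have hemb := (homeomorphUnitSphereProd E).measurableEmbedding
  set h : Metric.sphere (0 : E) 1 × Set.Ioi (0 : ℝ) → G :=
    fun p => g ((homeomorphUnitSphereProd E).symm p)
  have hcomap : ∫ x, g x ∂μ = ∫ x : ({0}ᶜ : Set E), g x ∂(μ.comap (↑)) := by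
    rw [integral_subtype_comap (measurableSet_singleton _).compl g, restrict_compl_singleton]
  have hh : Integrable h (μ.toSphere.prod (Measure.volumeIoiPow (Module.finrank ℝ E - 1))) := by
    refine (hmp.integrable_comp_emb hemb).1 ?_
    simpa only [h, Function.comp_def, Homeomorph.symm_apply_apply] using
      (integrableOn_iff_comap_subtypeVal (measurableSet_singleton _).compl).1 hg.integrableOn
  have hchange := hmp.integral_comp hemb h
  simp only [h, Homeomorph.symm_apply_apply] at hchange
  rw [hcomap, hchange, integral_prod h hh]
  simp only [h, homeomorphUnitSphereProd_symm_apply_coe]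
  exact integral_congr_ae (.of_forall fun ω => integral_volumeIoiPow _ fun r => g (r • (ω : E)))

theorem integrable_inv_norm_pow_smul_fderiv {φ : E → G} (hφ : ContDiff ℝ 1 φ)
    (hφc : HasCompactSupport φ) :
    Integrable (fun x => (‖x‖ ^ Module.finrank ℝ E)⁻¹ • fderiv ℝ φ x x) μ := by
  set n := Module.finrank ℝ E
  have hn : n ≠ 0 := Module.finrank_pos.ne'
  have hDφ := hφ.continuous_fderiv one_ne_zero
  obtain ⟨C, hC⟩ := hDφ.bounded_above_of_compact_support (hφc.fderiv (𝕜 := ℝ))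
  obtain ⟨R, hR⟩ := (hφc.fderiv (𝕜 := ℝ)).isBounded.subset_closedBall 0
  have hsupp : Function.support (fun x => (‖x‖ ^ n)⁻¹ • fderiv ℝ φ x x) ⊆ ball 0 (R + 1) := by
    intro x hx
    have : x ∈ tsupport (fderiv ℝ φ) := subset_tsupport _ fun h => hx (by simp [h])
    exact closedBall_subset_ball (lt_add_one R) (hR this)
  have hbound : ∀ x : E, ‖(‖x‖ ^ n)⁻¹ • fderiv ℝ φ x x‖ ≤ C * (‖x‖ ^ (n - 1))⁻¹ := by
    intro x
    rcases eq_or_ne x 0 with rfl | hx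
    · simpa using mul_nonneg ((norm_nonneg _).trans (hC 0)) (by positivity)
    calc ‖(‖x‖ ^ n)⁻¹ • fderiv ℝ φ x x‖ ≤ (‖x‖ ^ n)⁻¹ * (C * ‖x‖) := by
          rw [norm_smul, norm_inv, norm_pow, norm_norm]
          gcongr
          exact (fderiv ℝ φ x).le_of_opNorm_le (hC x) x
      _ = C * (‖x‖ ^ (n - 1))⁻¹ := by
          rw [← pow_sub_one_mul hn]
          field_simp [norm_ne_zero_iff.2 hx]
  have hball : IntegrableOn (fun x : E => C * (‖x‖ ^ (n - 1))⁻¹) (ball 0 (R + 1)) μ := by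
    refine (integrableOn_fun_norm_addHaar μ (f := fun r => C * (r ^ (n - 1))⁻¹)).2 ?_
    refine (integrableOn_const (by simp)).congr_fun (fun r (hr : r ∈ Set.Ioo 0 (R + 1)) => ?_)
      measurableSet_Ioo
    change C = r ^ (n - 1) * (C * (r ^ (n - 1))⁻¹)
    field_simp [hr.1.ne']
  refine (integrableOn_iff_integrable_of_support_subset hsupp).1 (hball.mono' ?_ ?_)
  · exact ((by fun_prop : Measurable fun x : E => (‖x‖ ^ n)⁻¹).aestronglyMeasurable.smul
      (hDφ.clm_apply continuous_id).aestronglyMeasurable)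
  · exact .of_forall hbound

theorem integral_inv_norm_pow_smul_fderiv [CompleteSpace G] {φ : E → G} (hφ : ContDiff ℝ 1 φ)
    (hφc : HasCompactSupport φ) :
    ∫ x, (‖x‖ ^ Module.finrank ℝ E)⁻¹ • fderiv ℝ φ x x ∂μ
      = -(Module.finrank ℝ E * μ.real (ball 0 1)) • φ 0 := by
  have hn : Module.finrank ℝ E ≠ 0 := Module.finrank_pos.ne'
  have hray : ∀ ω : sphere (0 : E) 1, ∫ r in Set.Ioi (0 : ℝ), r ^ (Module.finrank ℝ E - 1) •
      (‖r • (ω : E)‖ ^ Module.finrank ℝ E)⁻¹ • fderiv ℝ φ (r • (ω : E)) (r • (ω : E))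
      = -φ 0 := by
    intro ω
    rw [← integral_Ioi_fderiv_smul_eq_neg hφ hφc (ne_zero_of_mem_unit_sphere ω)]
    refine setIntegral_congr_fun measurableSet_Ioi fun r (hr : 0 < r) => ?_
    rw [map_smul, smul_smul, smul_smul, norm_smul, norm_eq_of_mem_sphere, mul_one,
      Real.norm_of_nonneg hr.le, ← pow_sub_one_mul hn]
    have : r ^ (Module.finrank ℝ E - 1) * (r ^ (Module.finrank ℝ E - 1) * r)⁻¹ * r = 1 := by
      field_simp
    rw [this, one_smul]
  rw [integral_eq_integral_toSphere_integral_Ioi μ (integrable_inv_norm_pow_smul_fderiv μ hφ hφc)]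
  simp_rw [hray]
  rw [integral_const, Measure.toSphere_real_apply_univ, smul_neg, neg_smul]

end Polar

theorem pairing_arsinh_norm {a : ℝ} (ha : 0 < a) {φ : Euc 2 → ℝ} (hφ : ContDiff ℝ 1 φ)
    (hφc : HasCompactSupport φ) :
    pairing (fun y => -a * arsinh (‖y‖ / a)) φ = 2 * π * a * φ 0 := by
  have hflux : ∀ᵐ x : Euc 2, inner ℝ (gradient (fun y => -a * arsinh (‖y‖ / a)) x)
      (gradient φ x) / √(1 - ‖gradient (fun y : Euc 2 => -a * arsinh (‖y‖ / a)) x‖ ^ 2)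
      = -a * ((‖x‖ ^ 2)⁻¹ • fderiv ℝ φ x x) := by
    filter_upwards [compl_mem_ae_iff.2 (measure_singleton (0 : Euc 2))] with x hx
    rw [div_eq_inv_mul, ← real_inner_smul_left, lorentzFlux_arsinh_norm ha hx,
      real_inner_smul_left, inner_gradient_right, smul_eq_mul]
    simp only [conj_trivial]
    ring
  have hrad := integral_inv_norm_pow_smul_fderiv (volume : Measure (Euc 2)) hφ hφc
  simp only [finrank_euclideanSpace, Fintype.card_fin] at hrad
  rw [pairing, integral_congr_ae hflux, integral_const_mul, hrad]
  simp only [Measure.real, EuclideanSpace.volume_ball_fin_two, ENNReal.ofReal_one, one_pow,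
    one_mul, ENNReal.toReal_ofReal pi_nonneg, smul_eq_mul]
  ring

theorem Phi2_eq {α : ℝ} (hα : 0 < α) :
    Phi2 α = fun x => -(α / (2 * π)) * arsinh (‖x‖ / (α / (2 * π))) := by
  ext x
  rw [Phi2, Phi2rad, Real.arsinh_div_eq_log_sub_log (by positivity)]

/-- Proposition 2.13: the two-dimensional fundamental solution
`Φ_{2,α}`. -/
theorem statement13 (α : ℝ) (hα : 0 < α) :
    Phi2 α 0 = 0 ∧
    ContDiffOn ℝ 2 (Phi2 α) {x : Euc 2 | x ≠ 0} ∧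
    (∀ x : Euc 2, x ≠ 0 → ‖gradient (Phi2 α) x‖ < 1 ∧ MC (Phi2 α) x = 0) ∧
    (∀ φ : Euc 2 → ℝ, ContDiff ℝ 1 φ → HasCompactSupport φ →
      pairing (Phi2 α) φ = α * φ 0) ∧
    Tendsto (fun x : Euc 2 => ‖gradient (Phi2 α) x‖) (𝓝[≠] 0) (𝓝 1) ∧
    Tendsto (fun x : Euc 2 => (inner ℝ (gradient (Phi2 α) x) (‖x‖⁻¹ • x) : ℝ))
      (𝓝[≠] 0) (𝓝 (-1)) := by
  have ha : 0 < α / (2 * π) := by positivity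
  rw [Phi2_eq hα]
  refine ⟨by simp, fun x hx => ?_, fun x hx => ⟨?_, ?_⟩, fun φ hφ hφc => ?_,
    tendsto_norm_gradient_arsinh_norm ha, tendsto_inner_gradient_arsinh_norm ha⟩
  · exact (contDiffAt_const.mul (Real.contDiff_arsinh.contDiffAt.comp x
      ((contDiffAt_norm ℝ hx).div_const _))).contDiffWithinAt
  · rw [norm_gradient_arsinh_norm ha hx]
    exact Real.inv_sqrt_one_add_sq_lt_one (div_ne_zero (norm_ne_zero_iff.2 hx) ha.ne')
  · rw [MC_arsinh_norm ha hx]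
    norm_num
  · rw [pairing_arsinh_norm ha hφ hφc]
    field_simp
end
end
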